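/- arXiv:0704.2521 — 5 statements merged into one kernel-verified Lean document; each statement's English description precedes it below -/
import Mathlib

section
/- Let k and n be coprime integers with n ≥ 1, and suppose cos(2πk/n) is not equal to −1, 0, or 1. Then cos(2πk/n) is not an algebraic integer. -/
/-!
Write `cos θ = (ζ + ζ⁻¹) / 2` with `ζ = exp (iθ)` a root of unity. Every complex embedding of the
number field `ℚ(ζ)` sends this element to `(ζ' + ζ'⁻¹) / 2` for another root of unity `ζ'`, so all its
conjugates lie in the closed unit disk. By Kronecker's theorem a nonzero algebraic integer with this
property is a root of unity, and the only real roots of unity are `±1`.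
-/

open Real IntermediateField

theorem NumberField.isOfFinOrder_half_add_inv_of_isIntegral {K : Type*} [Field K]
    [NumberField K] {ζ : K} (hζ : IsOfFinOrder ζ) (hx : IsIntegral ℤ ((ζ + ζ⁻¹) / 2))
    (hx₀ : (ζ + ζ⁻¹) / 2 ≠ 0) : IsOfFinOrder ((ζ + ζ⁻¹) / 2) := by
  obtain ⟨m, hm, hζm⟩ := hζ.exists_pow_eq_one
  have hbound (φ : K →+* ℂ) : ‖φ ((ζ + ζ⁻¹) / 2)‖ ≤ 1 := by
    have hφζ : ‖φ ζ‖ = 1 :=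
      Complex.norm_eq_one_of_pow_eq_one (by rw [← map_pow, hζm, map_one]) hm.ne'
    calc ‖φ ((ζ + ζ⁻¹) / 2)‖ = ‖φ ζ + (φ ζ)⁻¹‖ / 2 := by simp [map_ofNat]
      _ ≤ (‖φ ζ‖ + ‖(φ ζ)⁻¹‖) / 2 := by gcongr; exact norm_add_le _ _
      _ = 1 := by rw [norm_inv, hφζ]; norm_num
  obtain ⟨N, hN, hxN⟩ := Embeddings.pow_eq_one_of_norm_le_one K ℂ hx₀ hx hbound
  exact isOfFinOrder_iff_pow_eq_one.mpr ⟨N, hN, hxN⟩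

theorem Complex.isOfFinOrder_half_add_inv_of_isIntegral {ζ : ℂ} (hζ : IsOfFinOrder ζ)
    (hx : IsIntegral ℤ ((ζ + ζ⁻¹) / 2)) (hx₀ : (ζ + ζ⁻¹) / 2 ≠ 0) :
    IsOfFinOrder ((ζ + ζ⁻¹) / 2) := by
  obtain ⟨m, hm, hζm⟩ := hζ.exists_pow_eq_one
  have : FiniteDimensional ℚ ℚ⟮ζ⟯ :=
    adjoin.finiteDimensional (.of_pow hm (hζm ▸ isIntegral_one))
  have : NumberField ℚ⟮ζ⟯ := ⟨⟩
  set ι := algebraMap ℚ⟮ζ⟯ ℂ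
  set z := AdjoinSimple.gen ℚ ζ
  have hz : ι ((z + z⁻¹) / 2) = (ζ + ζ⁻¹) / 2 := by
    rw [map_div₀, map_add, map_inv₀, map_ofNat]; rfl
  rw [← hz] at hx hx₀ ⊢
  rw [isIntegral_algebraMap_iff ι.injective] at hx
  have hzfin : IsOfFinOrder z := (Submonoid.isOfFinOrder_coe ..).mp hζ
  exact ι.toMonoidHom.isOfFinOrder <|
    NumberField.isOfFinOrder_half_add_inv_of_isIntegral hzfin hx ((map_ne_zero ι).mp hx₀)

theorem Real.cos_rat_mul_pi_mem_of_isIntegral (q : ℚ) (h : IsIntegral ℤ (cos (q * π))) :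
    cos (q * π) ∈ ({-1, 0, 1} : Set ℝ) := by
  rcases eq_or_ne (cos (q * π)) 0 with h₀ | h₀
  · simp [h₀]
  set ζ := Complex.exp (q * π * Complex.I)
  have hζ : IsOfFinOrder ζ := isOfFinOrder_iff_pow_eq_one.mpr
    ⟨2 * q.den, by positivity, Complex.exp_rat_mul_pi_mul_I_pow_two_mul_den q⟩
  have hcos : (cos (q * π) : ℂ) = (ζ + ζ⁻¹) / 2 := by
    rw [Complex.ofReal_cos, Complex.cos, ← Complex.exp_neg, neg_mul]
    push_cast; rfl
  have hfinℂ : IsOfFinOrder (cos (q * π) : ℂ) := by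
    rw [hcos]
    refine Complex.isOfFinOrder_half_add_inv_of_isIntegral hζ ?_ ?_
    · exact hcos ▸ h.algebraMap (B := ℂ)
    · exact hcos ▸ Complex.ofReal_ne_zero.mpr h₀
  have hfin : IsOfFinOrder (cos (q * π)) :=
    Function.Injective.isOfFinOrder_iff (f := Complex.ofRealHom.toMonoidHom)
      Complex.ofReal_injective |>.mp hfinℂ
  rcases le_total 0 (cos (q * π)) with hpos | hneg
  · simp [hfin.eq_one hpos]
  · simp [hfin.eq_neg_one hneg]

theorem stmt_5_general (k n : ℤ)
    (h1 : Real.cos (2 * Real.pi * k / n) ≠ -1)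
    (h0 : Real.cos (2 * Real.pi * k / n) ≠ 0)
    (h2 : Real.cos (2 * Real.pi * k / n) ≠ 1) :
    ¬ IsIntegral ℤ (Real.cos (2 * Real.pi * k / n)) := by
  have hθ : 2 * π * k / n = ((2 * k / n : ℚ) : ℝ) * π := by push_cast; ring
  rw [hθ] at h0 h1 h2 ⊢
  intro h
  rcases cos_rat_mul_pi_mem_of_isIntegral _ h with h' | h' | h' <;> contradiction

/-- Let `k`, `n` be coprime integers with `n ≥ 1`, and suppose `cos(2πk/n)` is not
`-1`, `0` or `1`. Then `cos(2πk/n)` is not an algebraic integer. -/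
theorem stmt_5 (k n : ℤ) (hn : 1 ≤ n) (hkn : Int.gcd k n = 1)
    (h1 : Real.cos (2 * Real.pi * k / n) ≠ -1)
    (h0 : Real.cos (2 * Real.pi * k / n) ≠ 0)
    (h2 : Real.cos (2 * Real.pi * k / n) ≠ 1) :
    ¬ IsIntegral ℤ (Real.cos (2 * Real.pi * k / n)) :=
  stmt_5_general k n h1 h0 h2
end

section
/- Let α be a real algebraic integer with 0 < |α| < 1. Then arccos(α) is not a rational multiple of π; that is, arccos(α)/π is irrational. -/
/-!
If `arccos α = q π` with `q` rational, then `α = (ζ + ζ⁻¹) / 2` for the root of unity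
`ζ = exp (q π i)`. Every conjugate of `α` over `ℚ` is of the same shape, so has absolute value at
most `1`, while `α` itself has absolute value less than `1`. Hence the norm of `α` from `ℚ(ζ)` is a
rational integer of absolute value less than `1`, i.e. `0`, which forces `α = 0`.
-/

open NumberField IntermediateField

namespace NumberField

variable {K : Type*} [Field K] [NumberField K]

lemma one_le_norm_algebraNorm {x : K} (hx : IsIntegral ℤ x) (hx0 : x ≠ 0) :
    1 ≤ ‖Algebra.norm ℚ x‖ := by
  let y : 𝓞 K := ⟨x, hx⟩
  have hy0 : y ≠ 0 := fun h => hx0 congr(RingOfIntegers.val $h)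
  rw [show x = y from rfl, ← Algebra.coe_norm_int, Int.norm_cast_rat, Int.norm_eq_abs]
  exact_mod_cast Int.one_le_abs (Algebra.norm_ne_zero_iff.mpr hy0)

lemma house_le_one {x : K} (hle : ∀ σ : K →+* ℂ, ‖σ x‖ ≤ 1) : house x ≤ 1 := by
  rw [house_eq_sup']
  exact_mod_cast Finset.sup'_le _ _ fun (σ : K →+* ℂ) _ => (show ‖σ x‖₊ ≤ 1 from hle σ)

lemma eq_zero_of_isIntegral_of_norm_embedding_lt_one {x : K} (hx : IsIntegral ℤ x)
    (hle : ∀ σ : K →+* ℂ, ‖σ x‖ ≤ 1) (σ₀ : K →+* ℂ) (hlt : ‖σ₀ x‖ < 1) : x = 0 := by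
  by_contra hx0
  have hnorm_ge : 1 ≤ ‖Algebra.norm ℚ x‖ := one_le_norm_algebraNorm hx hx0
  have hnorm_le := norm_norm_le_norm_mul_house_pow x σ₀
  have hhouse : house x ^ (Module.finrank ℚ K - 1) ≤ 1 :=
    pow_le_one₀ (house_nonneg x) (house_le_one hle)
  nlinarith [norm_nonneg (σ₀ x)]

end NumberField

namespace Complex

lemma norm_add_inv_div_two_le_one {ζ : ℂ} {n : ℕ} (hζ : ζ ^ n = 1) (hn : n ≠ 0) :
    ‖(ζ + ζ⁻¹) / 2‖ ≤ 1 := by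
  have h1 : ‖ζ‖ = 1 := norm_eq_one_of_pow_eq_one hζ hn
  calc ‖(ζ + ζ⁻¹) / 2‖ ≤ (‖ζ‖ + ‖ζ⁻¹‖) / 2 := by
        rw [norm_div, Complex.norm_two]; gcongr; exact norm_add_le _ _
    _ = 1 := by rw [norm_inv, h1]; norm_num

lemma add_inv_div_two_eq_zero_of_isIntegral {ζ : ℂ} {n : ℕ} (hζ : ζ ^ n = 1) (hn : n ≠ 0)
    (hint : IsIntegral ℤ ((ζ + ζ⁻¹) / 2)) (hlt : ‖(ζ + ζ⁻¹) / 2‖ < 1) :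
    (ζ + ζ⁻¹) / 2 = 0 := by
  have hζint : IsIntegral ℚ ζ := .of_pow (Nat.pos_of_ne_zero hn) (hζ ▸ isIntegral_one)
  let K := ℚ⟮ζ⟯
  have : NumberField K := { to_finiteDimensional := adjoin.finiteDimensional hζint }
  let ξ : K := AdjoinSimple.gen ℚ ζ
  have hξ : ξ ^ n = 1 := Subtype.ext (by simp [ξ, hζ])
  have hconj (σ : K →+* ℂ) : ‖σ ((ξ + ξ⁻¹) / 2)‖ ≤ 1 := by
    simpa [map_ofNat] using
      norm_add_inv_div_two_le_one (show σ ξ ^ n = 1 by rw [← map_pow, hξ, map_one]) hn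
  have hx : (((ξ + ξ⁻¹) / 2 : K) : ℂ) = (ζ + ζ⁻¹) / 2 := by simp [ξ]; norm_cast
  rw [← hx] at hint hlt ⊢
  rw [eq_zero_of_isIntegral_of_norm_embedding_lt_one
    ((isIntegral_algebraMap_iff (algebraMap K ℂ).injective).mp hint) hconj (algebraMap K ℂ) hlt,
    ZeroMemClass.coe_zero]

end Complex

/-- Let `α` be a real algebraic integer with `0 < |α| < 1`. Then `arccos α` is not a
rational multiple of `π`: `arccos(α)/π` is irrational. -/
theorem stmt_6 (α : ℝ) (hint : IsIntegral ℤ α) (h0 : 0 < |α|) (h1 : |α| < 1) :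
    Irrational (Real.arccos α / Real.pi) := by
  rintro ⟨q, hq⟩
  have hcos : Real.cos (q * Real.pi) = α := by
    rw [hq, div_mul_cancel₀ _ Real.pi_ne_zero, Real.cos_arccos] <;>
      linarith [neg_abs_le α, le_abs_self α]
  set ζ := Complex.exp (q * Real.pi * Complex.I)
  have hαζ : (α : ℂ) = (ζ + ζ⁻¹) / 2 := by
    rw [← hcos, Complex.ofReal_cos, Complex.cos, ← Complex.exp_neg, neg_mul]
    push_cast; rfl
  have hintℂ : IsIntegral ℤ (α : ℂ) := hint.map (Algebra.ofId ℝ ℂ)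
  have hltℂ : ‖(α : ℂ)‖ < 1 := by rwa [Complex.norm_real, Real.norm_eq_abs]
  have hα : (α : ℂ) = 0 := by
    rw [hαζ] at hintℂ hltℂ ⊢
    exact Complex.add_inv_div_two_eq_zero_of_isIntegral
      (Complex.exp_rat_mul_pi_mul_I_pow_two_mul_den q) (by positivity) hintℂ hltℂ
  exact h0.ne' (abs_eq_zero.mpr (by exact_mod_cast hα))
end

section
/- Let m ≥ 3 and 1 ≤ j < m be integers, and let λ be the real number with λ > 1 and λ^{2m} = λ^{2j} + 1. Then arccos(λ^{−m}) is not a rational multiple of π; that is, arccos(λ^{−m})/π is irrational. -/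
/-!
`λ⁻¹` is a root of the monic integer polynomial `X^(2m) + X^(2(m-j)) - 1`, so `x = λ⁻ᵐ` is an
algebraic integer in `(0, 1)`. If `x = cos(qπ)` with `q` rational, then `x` is a root of
`T_{2·den q} - 1`, whose complex roots are all cosines and hence lie in the closed unit disc.
The minimal polynomial of `x` divides it, so has Mahler measure `1`, and by Kronecker's theorem
`x` is a root of unity, impossible for a real number in `(0, 1)`.
-/

open Polynomial Real

theorem pow_eq_one_of_isIntegral_of_norm_roots_le_one {x : ℂ} (hx : IsIntegral ℤ x) (hx0 : x ≠ 0)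
    {f : ℤ[X]} (hfx : aeval x f = 0) (hf : ∀ y : ℂ, aeval y f = 0 → ‖y‖ ≤ 1) :
    ∃ n, 0 < n ∧ x ^ n = 1 := by
  set p := minpoly ℤ x
  have hpf : p ∣ f := minpoly.isIntegrallyClosed_dvd hx hfx
  have hmonic : (p.map (Int.castRingHom ℂ)).Monic := (minpoly.monic hx).map _
  have hroots : ∀ y ∈ p.aroots ℂ, ‖y‖ ≤ 1 := fun y hy =>
    hf y (aeval_eq_zero_of_dvd_aeval_eq_zero hpf (mem_aroots.mp hy).2)
  have hM : (p.map (Int.castRingHom ℂ)).mahlerMeasure = 1 := by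
    rw [mahlerMeasure_eq_leadingCoeff_mul_prod_roots, hmonic.leadingCoeff, norm_one, one_mul]
    exact Multiset.prod_eq_one fun a ha => by
      obtain ⟨y, hy, rfl⟩ := Multiset.mem_map.mp ha
      exact max_eq_left (hroots y hy)
  exact pow_eq_one_of_mahlerMeasure_eq_one hM hx0
    (mem_aroots.mpr ⟨minpoly.ne_zero hx, minpoly.aeval ℤ x⟩)

theorem Polynomial.Chebyshev.norm_le_one_of_eval_T_eq_one {n : ℤ} (hn : n ≠ 0) {y : ℂ}
    (hy : (T ℂ n).eval y = 1) : ‖y‖ ≤ 1 := by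
  obtain ⟨θ, rfl⟩ := Complex.cos_surjective y
  rw [T_complex_cos] at hy
  obtain ⟨k, hk⟩ := Complex.cos_eq_one_iff.mp hy
  have hθ : θ = ((2 * k * π / n : ℝ) : ℂ) := by
    push_cast
    rw [eq_div_iff (Int.cast_ne_zero.mpr hn)]
    linear_combination -hk
  rw [hθ, ← Complex.ofReal_cos, Complex.norm_real, norm_eq_abs]
  exact abs_cos_le_one _

theorem Polynomial.Chebyshev.eval_T_two_mul_den_cos_rat_mul_pi (q : ℚ) :
    (T ℝ (2 * q.den)).eval (cos (q * π)) = 1 := by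
  rw [T_real_cos, ← cos_int_mul_two_pi q.num]
  congr 1
  have hq : (q.den : ℝ) * q = q.num := by exact_mod_cast Rat.den_mul_eq_num q
  push_cast
  linear_combination (2 * π) * hq

theorem isIntegral_inv_of_pow_eq_pow_add_one {K : Type*} [Field K] {l : K} (hl : l ≠ 0)
    {a b : ℕ} (hb : 0 < b) (hba : b < a) (h : l ^ a = l ^ b + 1) : IsIntegral ℤ l⁻¹ := by
  refine ⟨X ^ a + (X ^ (a - b) - 1), monic_X_pow_add ?_, ?_⟩
  · rw [← C_1, degree_X_pow_sub_C (by omega)]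
    exact_mod_cast (by omega : a - b < a)
  · have hsub : l⁻¹ ^ (a - b) = l⁻¹ ^ a * l ^ b := by
      rw [pow_sub₀ _ (inv_ne_zero hl) hba.le, inv_pow l b, inv_inv]
    have hinv : l⁻¹ ^ a * l ^ a = 1 := by rw [inv_pow, inv_mul_cancel₀ (pow_ne_zero _ hl)]
    simp only [eval₂_add, eval₂_sub, eval₂_X_pow, eval₂_one, hsub]
    linear_combination (-(l⁻¹ ^ a)) * h + hinv

theorem Real.abs_cos_rat_mul_pi_eq_one_of_isIntegral {q : ℚ} (h : IsIntegral ℤ (cos (q * π)))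
    (h0 : cos (q * π) ≠ 0) : |cos (q * π)| = 1 := by
  set x := cos (q * π)
  have hn : (2 * q.den : ℤ) ≠ 0 := by positivity
  obtain ⟨k, hk, hxk⟩ := pow_eq_one_of_isIntegral_of_norm_roots_le_one (x := x) h.algebraMap
    (Complex.ofReal_ne_zero.mpr h0) (f := Chebyshev.T ℤ (2 * q.den) - 1)
    (by rw [← Complex.coe_algebraMap, aeval_algebraMap_apply, map_sub, map_one, Chebyshev.aeval_T,
      Chebyshev.eval_T_two_mul_den_cos_rat_mul_pi, sub_self, map_zero])
    (fun y hy => by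
      rw [map_sub, map_one, Chebyshev.aeval_T, sub_eq_zero] at hy
      exact Chebyshev.norm_le_one_of_eval_T_eq_one hn hy)
  have hxk' : |x| ^ k = 1 := by
    simpa only [norm_pow, Complex.norm_real, norm_eq_abs, norm_one] using congrArg (‖·‖) hxk
  exact (pow_eq_one_iff_of_nonneg (abs_nonneg x) hk.ne').mp hxk'

theorem stmt_7_general (m j : ℕ) (hj : 1 ≤ j) (hjm : j < m) (l : ℝ) (hl : 1 < l)
    (h : l ^ (2 * m) = l ^ (2 * j) + 1) :
    Irrational (Real.arccos (l ^ (-(m : ℤ))) / Real.pi) := by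
  set x := l ^ (-(m : ℤ))
  have hx : x = l⁻¹ ^ m := by simp only [x, zpow_neg, zpow_natCast, inv_pow]
  have hx0 : 0 < x := by positivity
  have hx1 : x < 1 := hx ▸ pow_lt_one₀ (by positivity) (inv_lt_one_of_one_lt₀ hl) (by omega)
  have hint : IsIntegral ℤ x :=
    hx ▸ (isIntegral_inv_of_pow_eq_pow_add_one (by positivity) (by omega) (by omega) h).pow m
  rintro ⟨q, hq⟩
  have hcos : cos (q * π) = x := by
    rw [hq, div_mul_cancel₀ _ pi_ne_zero, cos_arccos (by linarith) hx1.le]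
  have habs := abs_cos_rat_mul_pi_eq_one_of_isIntegral (hcos ▸ hint) (hcos ▸ hx0.ne')
  rw [hcos, abs_of_pos hx0] at habs
  exact hx1.ne habs

/-- Let `m ≥ 3`, `1 ≤ j < m` be integers and let `λ > 1` be real with
`λ^(2m) = λ^(2j) + 1`. Then `arccos(λ⁻ᵐ)/π` is irrational. -/
theorem stmt_7 (m j : ℕ) (hm : 3 ≤ m) (hj : 1 ≤ j) (hjm : j < m) (l : ℝ) (hl : 1 < l)
    (h : l ^ (2 * m) = l ^ (2 * j) + 1) :
    Irrational (Real.arccos (l ^ (-(m : ℤ))) / Real.pi) :=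
  stmt_7_general m j hj hjm l hl h
end

section
/- Let m ≥ 3 and 1 ≤ j < m be integers with gcd(m, j) = 1. Then the polynomial x^m − x^j − 1 has a unique real root η with η > 1, and every complex root z of x^m − x^j − 1 with z ≠ η satisfies |z| < η. -/
/-
The map `x ↦ x ^ m - x ^ j` is strictly increasing on `[1, ∞)`, so `x ^ m = x ^ j + 1` has a
unique root `η > 1`, and any `z : ℂ` with `z ^ m = z ^ j + 1` satisfies
`‖z‖ ^ m ≤ ‖z‖ ^ j + 1`, whence `‖z‖ ≤ η`. If `‖z‖ = η`, the triangle inequality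
`‖z ^ j + 1‖ ≤ ‖z ^ j‖ + 1` is an equality, which forces `z ^ j = η ^ j`, and then
`z ^ m = η ^ m`; since `gcd (m, j) = 1`, the two equations give `z = η`.
-/

open Complex

lemma strictMonoOn_pow_sub_pow {m j : ℕ} (hjm : j < m) :
    StrictMonoOn (fun x : ℝ => x ^ m - x ^ j) (Set.Ici 1) := by
  intro a (ha : 1 ≤ a) b _ hab
  obtain ⟨k, rfl⟩ := Nat.exists_eq_add_of_lt hjm
  have hfactor : ∀ x : ℝ, x ^ (j + k + 1) - x ^ j = x ^ j * (x ^ (k + 1) - 1) := fun x => by ring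
  simp only [hfactor]
  exact mul_lt_mul' (pow_le_pow_left₀ (by linarith) hab.le j)
    (sub_lt_sub_right (pow_lt_pow_left₀ hab (by linarith) k.succ_ne_zero) 1)
    (sub_nonneg.mpr (one_le_pow₀ ha)) (pow_pos (by linarith) j)

lemma exists_pow_eq_pow_add_one {m j : ℕ} (hjm : j < m) :
    ∃ η : ℝ, 1 < η ∧ η ^ m = η ^ j + 1 := by
  have hcont : ContinuousOn (fun x : ℝ => x ^ m - x ^ j - 1) (Set.Icc 1 2) := by fun_prop
  have hsign : (0 : ℝ) ∈ Set.Icc (1 ^ m - 1 ^ j - 1) (2 ^ m - 2 ^ j - 1) := by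
    have h2 : (2 : ℝ) ^ (j + 1) ≤ 2 ^ m := pow_le_pow_right₀ (by norm_num) hjm
    have h1 : (1 : ℝ) ≤ 2 ^ j := one_le_pow₀ (by norm_num)
    constructor
    · norm_num
    · rw [pow_succ] at h2; linarith
  obtain ⟨η, ⟨hη1, -⟩, hη⟩ := intermediate_value_Icc (by norm_num) hcont hsign
  have hroot : η ^ m = η ^ j + 1 := by linarith [hη]
  refine ⟨η, lt_of_le_of_ne hη1 ?_, hroot⟩
  rintro rfl
  norm_num at hroot

lemma le_of_pow_le_pow_add_one {m j : ℕ} (hjm : j < m) {η r : ℝ} (hη : 1 ≤ η)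
    (hηroot : η ^ m = η ^ j + 1) (hr : r ^ m ≤ r ^ j + 1) : r ≤ η := by
  by_contra! hlt
  have := strictMonoOn_pow_sub_pow hjm (Set.mem_Ici.mpr hη)
    (Set.mem_Ici.mpr (hη.trans hlt.le)) hlt
  simp only at this
  linarith

lemma Complex.eq_norm_of_norm_add_one {w : ℂ} (h : ‖w + 1‖ = ‖w‖ + 1) : w = ‖w‖ := by
  have hsmul : ‖(1 : ℂ)‖ • w = ‖w‖ • (1 : ℂ) :=
    norm_add_eq_iff_real.mp (by rwa [norm_one])
  simpa [Complex.real_smul] using hsmul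

lemma eq_of_pow_eq_pow_of_coprime {G : Type*} [CommGroupWithZero G] {x y : G} {m j : ℕ}
    (hmj : m.Coprime j) (hy : y ≠ 0) (hm : x ^ m = y ^ m) (hj : x ^ j = y ^ j) : x = y := by
  have hquot : (x / y) ^ m = 1 ∧ (x / y) ^ j = 1 := by
    simp only [div_pow, hm, hj, div_self (pow_ne_zero _ hy), and_self]
  exact (div_eq_one_iff_eq hy).mp ((pow_eq_one_iff_of_coprime hmj).mp hquot)

lemma Complex.eq_of_pow_eq_pow_add_one_of_norm_eq {m j : ℕ} (hmj : m.Coprime j) {η : ℝ}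
    (hη : 0 < η) (hηroot : η ^ m = η ^ j + 1) {z : ℂ} (hz : z ^ m = z ^ j + 1)
    (hnorm : ‖z‖ = η) : z = η := by
  have hpowj : z ^ j = (η : ℂ) ^ j := by
    have htriangle : ‖z ^ j + 1‖ = ‖z ^ j‖ + 1 := by
      rw [← hz, norm_pow, norm_pow, hnorm, hηroot]
    rw [Complex.eq_norm_of_norm_add_one htriangle, norm_pow, hnorm, ofReal_pow]
  have hpowm : z ^ m = (η : ℂ) ^ m := by
    rw [hz, hpowj]
    exact_mod_cast hηroot.symm
  exact eq_of_pow_eq_pow_of_coprime hmj (ofReal_ne_zero.mpr hη.ne') hpowm hpowj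

theorem stmt_10_general (m j : ℕ) (hjm : j < m)
    (hgcd : Nat.gcd m j = 1) :
    ∃ η : ℝ, 1 < η ∧ η ^ m = η ^ j + 1 ∧
      (∀ x : ℝ, 1 < x → x ^ m = x ^ j + 1 → x = η) ∧
      (∀ z : ℂ, z ^ m = z ^ j + 1 → z ≠ (η : ℂ) → ‖z‖ < η) := by
  obtain ⟨η, hη1, hηroot⟩ := exists_pow_eq_pow_add_one hjm
  refine ⟨η, hη1, hηroot, fun x hx hxroot => ?_, fun z hz hzη => ?_⟩
  · refine (strictMonoOn_pow_sub_pow hjm).injOn (Set.mem_Ici.mpr hx.le)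
      (Set.mem_Ici.mpr hη1.le) ?_
    simp only [hxroot, hηroot, add_sub_cancel_left]
  · have hnorm : ‖z‖ ^ m ≤ ‖z‖ ^ j + 1 := by
      simpa only [← hz, norm_pow, norm_one] using norm_add_le (z ^ j) 1
    refine (le_of_pow_le_pow_add_one hjm hη1.le hηroot hnorm).lt_of_ne fun heq => hzη ?_
    exact Complex.eq_of_pow_eq_pow_add_one_of_norm_eq hgcd (by linarith) hηroot hz heq

/-- Let `m ≥ 3` and `1 ≤ j < m` with `gcd(m,j) = 1`. Then `x^m - x^j - 1` has a unique
real root `η > 1`, and every complex root `z ≠ η` satisfies `|z| < η`. -/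
theorem stmt_10 (m j : ℕ) (hm : 3 ≤ m) (hj : 1 ≤ j) (hjm : j < m)
    (hgcd : Nat.gcd m j = 1) :
    ∃ η : ℝ, 1 < η ∧ η ^ m = η ^ j + 1 ∧
      (∀ x : ℝ, 1 < x → x ^ m = x ^ j + 1 → x = η) ∧
      (∀ z : ℂ, z ^ m = z ^ j + 1 → z ≠ (η : ℂ) → ‖z‖ < η) :=
  stmt_10_general m j hjm hgcd
end

section
/- Let S be an m×m real matrix with nonnegative entries such that S^k has all entries strictly positive for some k ≥ 1 (S is primitive). Let M be an m×m complex matrix with |M_{ij}| ≤ S_{ij} for all i, j, and suppose there exist r ≥ 1 and indices k₀, ℓ₀ such that |(M^r)_{k₀ℓ₀}| < (S^r)_{k₀ℓ₀}. Then for all indices i, j, the ratio (M^s)_{ij} / (S^s)_{ij} tends to 0 as s → ∞. -/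
open Filter Topology

/-!
Write `|A| ≤ X` for entrywise domination `‖A i j‖ ≤ X i j`; it is multiplicative. Instead of
comparing Perron eigenvalues, argue directly: the entries of `S ^ k` lie in some `[α, β]` with
`α > 0`, so for `s ≥ k` the entries in one column of `S ^ s` agree up to the factor `β / α`, and
every entry of `S ^ (k + r + s)` is at most `C (S ^ k) i k₀ (S ^ s) ℓ₀ j`. With
`ε = (S ^ r) k₀ ℓ₀ - ‖(M ^ r) k₀ ℓ₀‖ > 0` we have `|M ^ r| ≤ S ^ r - ε E_{k₀ℓ₀}`, so
`|M ^ s| ≤ c S ^ s` implies `|M ^ (k + r + s)| ≤ c (S ^ (k + r + s) - ε S ^ k E_{k₀ℓ₀} S ^ s)`,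
which is at most `c C / (C + ε) S ^ (k + r + s)`. Iterating, `|M ^ s| ≤ θ ^ N S ^ s` for a fixed
`θ < 1` and `N ≈ s / (k + r)`.
-/

namespace Matrix

theorem norm_mul_apply_le_of_forall_norm_le {l m n R : Type*} [Fintype m]
    [NonUnitalSeminormedRing R] {A : Matrix l m R} {B : Matrix m n R} {X : Matrix l m ℝ}
    {Y : Matrix m n ℝ} (hA : ∀ i j, ‖A i j‖ ≤ X i j) (hB : ∀ i j, ‖B i j‖ ≤ Y i j)
    (i : l) (j : n) : ‖(A * B) i j‖ ≤ (X * Y) i j := by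
  rw [mul_apply, mul_apply]
  exact (norm_sum_le _ _).trans <| Finset.sum_le_sum fun a _ => (norm_mul_le _ _).trans <|
    mul_le_mul (hA i a) (hB a j) (norm_nonneg _) ((norm_nonneg _).trans (hA i a))

variable {n : Type*} [Fintype n] [DecidableEq n]

theorem norm_pow_apply_le_of_forall_norm_le {R : Type*} [SeminormedRing R] [NormOneClass R]
    {A : Matrix n n R} {X : Matrix n n ℝ} (hA : ∀ i j, ‖A i j‖ ≤ X i j) (s : ℕ) :
    ∀ i j, ‖(A ^ s) i j‖ ≤ (X ^ s) i j := by
  induction s with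
  | zero => intro i j; rcases eq_or_ne i j with rfl | h <;> simp [*]
  | succ s ih => rw [pow_succ, pow_succ]; exact norm_mul_apply_le_of_forall_norm_le ih hA

theorem mul_single_mul_apply {R : Type*} [NonUnitalNonAssocSemiring R] (A B : Matrix n n R)
    (a b : n) (c : R) (i j : n) : (A * single a b c * B) i j = A i a * c * B b j := by
  simp [mul_apply, single_apply, ite_and, Finset.sum_ite_eq]

theorem mul_mul_apply_le {l m o p : Type*} [Fintype m] [Fintype o] {X : Matrix l m ℝ}
    {Z : Matrix m o ℝ} {Y : Matrix o p ℝ} {i : l} {j : p} {u v : ℝ}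
    (hX0 : ∀ x, 0 ≤ X i x) (hZ0 : ∀ x y, 0 ≤ Z x y) (hY0 : ∀ y, 0 ≤ Y y j)
    (hX : ∀ x, X i x ≤ u) (hY : ∀ y, Y y j ≤ v) :
    (X * Z * Y) i j ≤ u * (∑ x, ∑ y, Z x y) * v := by
  calc (X * Z * Y) i j = ∑ x, ∑ y, X i x * Z x y * Y y j := by
        simp only [mul_apply, Finset.sum_mul]; exact Finset.sum_comm
    _ ≤ ∑ x, ∑ y, u * Z x y * v := Finset.sum_le_sum fun x _ => Finset.sum_le_sum fun y _ =>
        mul_le_mul (mul_le_mul_of_nonneg_right (hX x) (hZ0 x y)) (hY y) (hY0 y)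
          (mul_nonneg ((hX0 x).trans (hX x)) (hZ0 x y))
    _ = u * (∑ x, ∑ y, Z x y) * v := by simp only [Finset.mul_sum, Finset.sum_mul]


variable {S : Matrix n n ℝ}

theorem mul_pow_apply_le_mul_pow_apply (hS : ∀ i j, 0 ≤ S i j) {k s : ℕ} {α β : ℝ}
    (hα : ∀ i j, α ≤ (S ^ k) i j) (hβ : ∀ i j, (S ^ k) i j ≤ β) (hks : k ≤ s) (a b j : n) :
    α * (S ^ s) a j ≤ β * (S ^ s) b j := by
  obtain ⟨t, rfl⟩ := Nat.exists_eq_add_of_le hks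
  have h0 := pow_apply_nonneg hS
  simp only [pow_add, mul_apply, Finset.mul_sum]
  refine Finset.sum_le_sum fun x _ => ?_
  calc α * ((S ^ k) a x * (S ^ t) x j)
      ≤ (S ^ k) b x * ((S ^ k) a x * (S ^ t) x j) :=
        mul_le_mul_of_nonneg_right (hα b x) (mul_nonneg (h0 k a x) (h0 t x j))
    _ = (S ^ k) a x * ((S ^ k) b x * (S ^ t) x j) := mul_left_comm _ _ _
    _ ≤ β * ((S ^ k) b x * (S ^ t) x j) :=
        mul_le_mul_of_nonneg_right (hβ a x) (mul_nonneg (h0 k b x) (h0 t x j))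

theorem exists_pow_add_add_apply_le (hS : ∀ i j, 0 ≤ S i j) {k : ℕ}
    (hk : ∀ i j, 0 < (S ^ k) i j) (q : ℕ) (a b : n) :
    ∃ C, 0 ≤ C ∧ ∀ s, k ≤ s → ∀ i j,
      (S ^ (k + q + s)) i j ≤ C * ((S ^ k) i a * (S ^ s) b j) := by
  have : Nonempty n := ⟨a⟩
  obtain ⟨⟨a₁, a₂⟩, hα⟩ := Finite.exists_min fun x : n × n => (S ^ k) x.1 x.2
  obtain ⟨⟨b₁, b₂⟩, hβ⟩ := Finite.exists_max fun x : n × n => (S ^ k) x.1 x.2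
  set α := (S ^ k) a₁ a₂
  set β := (S ^ k) b₁ b₂
  have hα0 : 0 < α := hk a₁ a₂
  have hβα : 0 ≤ β / α := div_nonneg (hk b₁ b₂).le hα0.le
  have h0 := pow_apply_nonneg hS
  refine ⟨(β / α) ^ 2 * ∑ x, ∑ y, (S ^ q) x y,
    mul_nonneg (sq_nonneg _) (Finset.sum_nonneg fun x _ => Finset.sum_nonneg fun y _ => h0 q x y),
    fun s hs i j => ?_⟩
  have hrow : ∀ x, (S ^ k) i x ≤ β / α * (S ^ k) i a := fun x =>
    calc (S ^ k) i x ≤ β := hβ (i, x)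
      _ = β / α * α := (div_mul_cancel₀ _ hα0.ne').symm
      _ ≤ β / α * (S ^ k) i a := mul_le_mul_of_nonneg_left (hα (i, a)) hβα
  have hcol : ∀ y, (S ^ s) y j ≤ β / α * (S ^ s) b j := fun y => by
    rw [div_mul_eq_mul_div, le_div_iff₀' hα0]
    exact mul_pow_apply_le_mul_pow_apply hS (fun i j => hα (i, j)) (fun i j => hβ (i, j)) hs y b j
  calc (S ^ (k + q + s)) i j = (S ^ k * S ^ q * S ^ s) i j := by rw [pow_add, pow_add]
    _ ≤ β / α * (S ^ k) i a * (∑ x, ∑ y, (S ^ q) x y) * (β / α * (S ^ s) b j) :=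
        mul_mul_apply_le (h0 k i) (h0 q) (fun y => h0 s y j) hrow hcol
    _ = _ := by ring

theorem norm_pow_add_apply_le_of_deficit {R : Type*} [SeminormedRing R] [NormOneClass R]
    {M : Matrix n n R} (hMS : ∀ i j, ‖M i j‖ ≤ S i j) {k r s : ℕ} {k₀ ℓ₀ : n} {ε C c : ℝ}
    (hε : 0 < ε) (hC : 0 ≤ C) (hc : 0 ≤ c) (hdef : ‖(M ^ r) k₀ ℓ₀‖ + ε ≤ (S ^ r) k₀ ℓ₀)
    (hSC : ∀ i j, (S ^ (k + r + s)) i j ≤ C * ((S ^ k) i k₀ * (S ^ s) ℓ₀ j))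
    (hMs : ∀ i j, ‖(M ^ s) i j‖ ≤ c * (S ^ s) i j) (i j : n) :
    ‖(M ^ (k + r + s)) i j‖ ≤ C / (C + ε) * c * (S ^ (k + r + s)) i j := by
  have h0 := pow_apply_nonneg fun i j => (norm_nonneg _).trans (hMS i j)
  have hMr : ∀ i j, ‖(M ^ r) i j‖ ≤ (S ^ r - single k₀ ℓ₀ ε) i j := by
    intro i j
    rw [sub_apply, single_apply]
    split_ifs with h
    · obtain ⟨rfl, rfl⟩ := h
      linarith
    · rw [sub_zero]
      exact norm_pow_apply_le_of_forall_norm_le hMS r i j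
  have hMs' : ∀ i j, ‖(M ^ s) i j‖ ≤ (c • S ^ s) i j := by simpa only [smul_apply, smul_eq_mul]
  have key := norm_mul_apply_le_of_forall_norm_le (norm_mul_apply_le_of_forall_norm_le
    (norm_pow_apply_le_of_forall_norm_le hMS k) hMr) hMs' i j
  rw [← pow_add, ← pow_add] at key
  simp only [Matrix.mul_sub, Matrix.sub_mul, Matrix.mul_smul, ← pow_add, smul_apply, sub_apply,
    mul_single_mul_apply, smul_eq_mul] at key
  set P := (S ^ (k + r + s)) i j
  set x := (S ^ k) i k₀ * (S ^ s) ℓ₀ j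
  have hx : 0 ≤ x := mul_nonneg (h0 k i k₀) (h0 s ℓ₀ j)
  have hP : P - ε * x ≤ C / (C + ε) * P := by
    rw [div_mul_eq_mul_div, le_div_iff₀ (by linarith)]
    nlinarith [mul_nonneg hε.le (sub_nonneg.2 (hSC i j)), mul_nonneg (mul_nonneg hε.le hε.le) hx]
  calc ‖(M ^ (k + r + s)) i j‖ ≤ c * (P - ε * x) := key.trans_eq (by ring)
    _ ≤ c * (C / (C + ε) * P) := mul_le_mul_of_nonneg_left hP hc
    _ = C / (C + ε) * c * P := by ring

theorem norm_pow_apply_le_pow_of_contraction {R : Type*} [SeminormedRing R] {A : Matrix n n R}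
    {T : Matrix n n ℝ} {s₀ p : ℕ} {θ : ℝ} (hθ : 0 ≤ θ)
    (hbase : ∀ s, s₀ ≤ s → ∀ i j, ‖(A ^ s) i j‖ ≤ (T ^ s) i j)
    (hstep : ∀ s, s₀ ≤ s → ∀ c, 0 ≤ c → (∀ i j, ‖(A ^ s) i j‖ ≤ c * (T ^ s) i j) →
      ∀ i j, ‖(A ^ (p + s)) i j‖ ≤ θ * c * (T ^ (p + s)) i j) (N : ℕ) :
    ∀ s, s₀ + N * p ≤ s → ∀ i j, ‖(A ^ s) i j‖ ≤ θ ^ N * (T ^ s) i j := by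
  induction N with
  | zero => simpa using hbase
  | succ N ih =>
    intro s hs
    rw [add_mul, one_mul] at hs
    obtain ⟨t, rfl⟩ : ∃ t, s = p + t := ⟨s - p, by omega⟩
    rw [pow_succ']
    exact hstep t (by omega) _ (pow_nonneg hθ N) (ih t (by omega))

end Matrix

open Matrix

-- When `y = 0` the quotient is `0` by convention, so no positivity of `y` is needed.
theorem norm_div_ofReal_le {𝕜 : Type*} [RCLike 𝕜] {x : 𝕜} {y c : ℝ} (hc : 0 ≤ c)
    (h : ‖x‖ ≤ c * y) : ‖x / (y : 𝕜)‖ ≤ c := by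
  rcases eq_or_ne y 0 with rfl | hy
  · simpa using hc
  · rw [norm_div, RCLike.norm_ofReal, div_le_iff₀ (abs_pos.2 hy)]
    exact h.trans (mul_le_mul_of_nonneg_left (le_abs_self y) hc)

theorem tendsto_pow_apply_div_nhds_zero_of_contraction {n 𝕜 : Type*} [Fintype n] [DecidableEq n]
    [RCLike 𝕜] {A : Matrix n n 𝕜} {T : Matrix n n ℝ} {s₀ p : ℕ} (hp : 0 < p) {θ : ℝ}
    (hθ0 : 0 ≤ θ) (hθ1 : θ < 1)
    (hbase : ∀ s, s₀ ≤ s → ∀ i j, ‖(A ^ s) i j‖ ≤ (T ^ s) i j)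
    (hstep : ∀ s, s₀ ≤ s → ∀ c, 0 ≤ c → (∀ i j, ‖(A ^ s) i j‖ ≤ c * (T ^ s) i j) →
      ∀ i j, ‖(A ^ (p + s)) i j‖ ≤ θ * c * (T ^ (p + s)) i j) (i j : n) :
    Tendsto (fun s => (A ^ s) i j / ((T ^ s) i j : 𝕜)) atTop (𝓝 0) := by
  have hθN : Tendsto (fun s => θ ^ ((s - s₀) / p)) atTop (𝓝 0) :=
    (tendsto_pow_atTop_nhds_zero_of_lt_one hθ0 hθ1).comp
      ((Nat.tendsto_div_const_atTop hp.ne').comp (tendsto_sub_atTop_nat s₀))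
  refine squeeze_zero_norm' ?_ hθN
  filter_upwards [eventually_ge_atTop s₀] with s hs
  have hN : s₀ + (s - s₀) / p * p ≤ s := by have := Nat.div_mul_le_self (s - s₀) p; omega
  exact norm_div_ofReal_le (pow_nonneg hθ0 _)
    (norm_pow_apply_le_pow_of_contraction hθ0 hbase hstep _ s hN i j)

/-- Let `S` be a primitive nonnegative real `m × m` matrix and `M` a complex matrix
with `|M i j| ≤ S i j` entrywise. If for some `r ≥ 1` and some entry
`|(M^r) k₀ ℓ₀| < (S^r) k₀ ℓ₀`, then `(M^s) i j / (S^s) i j → 0` as `s → ∞`,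
for all indices `i`, `j`. -/
theorem stmt_11 {m : ℕ} (S : Matrix (Fin m) (Fin m) ℝ)
    (hS0 : ∀ i j, 0 ≤ S i j)
    (hprim : ∃ k : ℕ, 1 ≤ k ∧ ∀ i j, 0 < (S ^ k) i j)
    (M : Matrix (Fin m) (Fin m) ℂ)
    (hMS : ∀ i j, ‖M i j‖ ≤ S i j)
    (hlt : ∃ r : ℕ, 1 ≤ r ∧ ∃ k₀ ℓ₀ : Fin m,
      ‖(M ^ r) k₀ ℓ₀‖ < (S ^ r) k₀ ℓ₀) :
    ∀ i j : Fin m,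
      Tendsto (fun s : ℕ => (M ^ s) i j / (((S ^ s) i j : ℝ) : ℂ)) atTop (nhds 0) := by
  obtain ⟨k, -, hk⟩ := hprim
  obtain ⟨r, hr, k₀, ℓ₀, hlt⟩ := hlt
  obtain ⟨C, hC0, hC⟩ := exists_pow_add_add_apply_le hS0 hk r k₀ ℓ₀
  set ε := (S ^ r) k₀ ℓ₀ - ‖(M ^ r) k₀ ℓ₀‖
  have hε : 0 < ε := sub_pos.2 hlt
  exact tendsto_pow_apply_div_nhds_zero_of_contraction (s₀ := k) (p := k + r) (by omega)
    (div_nonneg hC0 (by linarith)) ((div_lt_one (by linarith)).2 (by linarith))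
    (fun s _ => norm_pow_apply_le_of_forall_norm_le hMS s)
    fun s hs c hc hMs => norm_pow_add_apply_le_of_deficit hMS hε hC0 hc (by simp [ε]) (hC s hs) hMs
end
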